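/- arXiv:1005.1099 — 2 statements merged into one kernel-verified Lean document; each statement's English description precedes it below -/
import Mathlib

section
/- Let (c_n) be a sequence in ℝ^p with ‖c_n‖ → ∞ as n → ∞. Then there exist x ∈ {−1,1}^p (a vector all of whose coordinates are ±1), ε ∈ (0,1), and a strictly increasing function φ : ℕ → ℕ such that inf_{y ∈ B(x,ε)} c_{φ(n)}·y → ∞ as n → ∞; in particular limsup_n inf_{y ∈ B(x,ε)} c_n·y = ∞. -/
/-!
The sign pattern of `c n` takes only finitely many values, so one pattern `x ∈ {−1,1}^p` is taken
along a subsequence. There `⟪c n, x⟫ = ∑ |c n i| ≥ ‖c n‖`, and every `y` with `‖y - x‖ < 1/2`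
satisfies `⟪c n, y⟫ ≥ ⟪c n, x⟫ - ‖c n‖ / 2 ≥ ‖c n‖ / 2 → ∞`.
-/

open Filter RealInnerProductSpace

section SignVector

variable {ι : Type*}

def signVector (s : ι → Bool) : EuclideanSpace ℝ ι :=
  WithLp.toLp 2 fun i => if s i then 1 else -1

theorem signVector_apply_eq_one_or_eq_neg_one (s : ι → Bool) (i : ι) :
    signVector s i = 1 ∨ signVector s i = -1 := by
  by_cases h : s i <;> simp [signVector, h]

theorem inner_signVector_decide_nonneg_eq_sum_abs [Fintype ι] (v : EuclideanSpace ℝ ι) :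
    ⟪v, signVector fun i => decide (0 ≤ v i)⟫ = ∑ i, |v i| := by
  rw [PiLp.inner_apply]
  refine Finset.sum_congr rfl fun i _ => ?_
  by_cases h : 0 ≤ v i
  · simp [signVector, h, abs_of_nonneg h]
  · simp [signVector, h, abs_of_neg (not_le.1 h)]

theorem EuclideanSpace.norm_le_sum_abs [Fintype ι] (v : EuclideanSpace ℝ ι) : ‖v‖ ≤ ∑ i, |v i| := by
  rw [EuclideanSpace.norm_eq, Real.sqrt_le_left (Finset.sum_nonneg fun i _ => abs_nonneg _)]
  simpa using Finset.sum_sq_le_sq_sum_of_nonneg (s := Finset.univ) fun i _ => abs_nonneg (v i)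

end SignVector

theorem inner_sub_norm_mul_le_iInf_ball {E : Type*} [NormedAddCommGroup E] [InnerProductSpace ℝ E]
    (c x : E) {ε : ℝ} (hε : 0 < ε) : ⟪c, x⟫ - ‖c‖ * ε ≤ ⨅ y : Metric.ball x ε, ⟪c, (y : E)⟫ := by
  have : Nonempty (Metric.ball x ε) := ⟨⟨x, Metric.mem_ball_self hε⟩⟩
  refine le_ciInf fun ⟨y, hy⟩ => ?_
  have hxy : ‖x - y‖ ≤ ε := by
    rw [← dist_eq_norm, dist_comm]
    exact (Metric.mem_ball.1 hy).le
  have := real_inner_le_norm c (x - y)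
  rw [inner_sub_right] at this
  nlinarith [norm_nonneg c]

/-- If `‖c_n‖ → ∞`, then there are a sign vector `x ∈ {−1,1}^p`,
`ε ∈ (0,1)` and a subsequence along which `inf_{y ∈ B(x,ε)} c_n·y → ∞`; in particular,
for every `M` one frequently has `inf_{y ∈ B(x,ε)} c_n·y ≥ M`. -/
theorem statement4 {p : ℕ} (c : ℕ → EuclideanSpace ℝ (Fin p))
    (hc : Tendsto (fun n => ‖c n‖) atTop atTop) :
    ∃ x : EuclideanSpace ℝ (Fin p), (∀ i, x i = 1 ∨ x i = -1) ∧
      ∃ ε : ℝ, 0 < ε ∧ ε < 1 ∧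
        (∃ φ : ℕ → ℕ, StrictMono φ ∧
          Tendsto (fun n => ⨅ y : Metric.ball x ε, ⟪c (φ n), (y : EuclideanSpace ℝ (Fin p))⟫)
            atTop atTop) ∧
        (∀ M : ℝ, ∃ᶠ n in atTop,
          M ≤ ⨅ y : Metric.ball x ε, ⟪c n, (y : EuclideanSpace ℝ (Fin p))⟫) := by
  set pattern : ℕ → Fin p → Bool := fun n i => decide (0 ≤ c n i)
  obtain ⟨s, hs⟩ : ∃ s, ∃ᶠ n in atTop, pattern n = s :=
    frequently_exists.1 (Frequently.of_forall fun n => ⟨_, rfl⟩)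
  obtain ⟨φ, hφ, hφs⟩ := extraction_of_frequently_atTop hs
  have hbound : ∀ n, ‖c (φ n)‖ * (1 / 2) ≤
      ⨅ y : Metric.ball (signVector s) (1 / 2), ⟪c (φ n), (y : EuclideanSpace ℝ (Fin p))⟫ := by
    intro n
    have hnorm : ‖c (φ n)‖ ≤ ⟪c (φ n), signVector s⟫ := by
      rw [← hφs n, inner_signVector_decide_nonneg_eq_sum_abs]
      exact EuclideanSpace.norm_le_sum_abs _
    linarith [inner_sub_norm_mul_le_iInf_ball (c (φ n)) (signVector s) one_half_pos]
  have hlim := tendsto_atTop_mono hbound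
    ((hc.comp hφ.tendsto_atTop).atTop_mul_const one_half_pos)
  refine ⟨signVector s, signVector_apply_eq_one_or_eq_neg_one s, 1 / 2, one_half_pos,
    one_half_lt_one, ⟨φ, hφ, hlim⟩, fun M => ?_⟩
  exact hφ.tendsto_atTop.frequently_map _ (fun n h => h) (hlim.eventually_ge_atTop M).frequently
end

section
/- Let a ∈ ℝ^p, let A be a symmetric p×p real matrix, and let K be a (nonnegative) measure on ℝ^p∖{0} with ∫(|z|²∧|z|) dK(z) < ∞ and ∫_{|z|>1} e^{k·z} dK(z) < ∞ for all k ∈ ℝ^p. Then the function R : ℂ^p → ℂ defined by R(y) = y·a + ½ yᵀ A y + ∫ (e^{y·z} − 1 − y·z) dK(z) (where y·z = Σ yᵢ zᵢ for y ∈ ℂ^p, z ∈ ℝ^p) is well-defined and analytic on all of ℂ^p. -/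
/-!
For fixed `z` the integrand is `g (y ⬝ z)` with `g w = exp w - 1 - w = ∑_{n ≥ 2} wⁿ / n!`, so
integrating term by term gives the candidate power series `∑ₙ ∫ (y ⬝ z)ⁿ / n! dK(z)` in `y`.
Both the termwise integration and the infinite radius of convergence follow from
`∑ₙ rⁿ / n! ∫ ‖z‖ⁿ dK < ∞` for every `r`: on `‖z‖ ≤ 1` bound `‖z‖ⁿ` by `‖z‖²`, and on `‖z‖ > 1`
bound `(r ‖z‖)ⁿ / n!` by `2⁻ⁿ exp (2 r ‖z‖)`. Finally `exp (c ‖z‖)` is dominated by the finite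
sum of `exp ⟪k, z⟫` over the sign vectors `k ∈ {± c}ᵖ`, which are integrable on `‖z‖ > 1`.
-/

open MeasureTheory RealInnerProductSpace
open scoped NNReal Nat

namespace MeasureTheory

variable {α E : Type*} [MeasurableSpace α] {μ : Measure α} [NormedAddCommGroup E]

theorem Integrable.of_hasSum_of_summable_integral_norm {G : ℕ → α → E} {g : α → E}
    (hG : ∀ n, Integrable (G n) μ) (hsum : Summable fun n => ∫ a, ‖G n a‖ ∂μ)
    (hg : ∀ᵐ a ∂μ, HasSum (fun n => G n a) (g a)) : Integrable g μ := by
  refine ⟨aestronglyMeasurable_of_tendsto_ae Filter.atTop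
    (fun n => Finset.aestronglyMeasurable_fun_sum _ fun i _ => (hG i).1)
    (hg.mono fun a ha => ha.tendsto_sum_nat), ?_⟩
  calc ∫⁻ a, ‖g a‖ₑ ∂μ ≤ ∫⁻ a, ∑' n, ‖G n a‖ₑ ∂μ :=
        lintegral_mono_ae (hg.mono fun a ha => ha.tsum_eq ▸ enorm_tsum_le_tsum_enorm)
    _ = ∑' n, ∫⁻ a, ‖G n a‖ₑ ∂μ := lintegral_tsum fun n => (hG n).1.enorm
    _ = ∑' n, ENNReal.ofReal (∫ a, ‖G n a‖ ∂μ) := by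
        simp_rw [ofReal_integral_norm_eq_lintegral_enorm (hG _)]
    _ = ENNReal.ofReal (∑' n, ∫ a, ‖G n a‖ ∂μ) :=
        (ENNReal.ofReal_tsum_of_nonneg (fun n => integral_nonneg fun a => norm_nonneg _) hsum).symm
    _ < ⊤ := ENNReal.ofReal_lt_top

end MeasureTheory

section IntegralOfPowerSeries

variable {α 𝕜 E F : Type*} [MeasurableSpace α] {μ : Measure α} [RCLike 𝕜]
  [NormedAddCommGroup E] [NormedSpace 𝕜 E] [NormedAddCommGroup F] [NormedSpace 𝕜 F]
  {q : α → FormalMultilinearSeries 𝕜 E F} {f : α → E → F}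

theorem integrable_series_apply (hq : ∀ n, Integrable (fun a => q a n) μ) (n : ℕ) (y : E) :
    Integrable (fun a => q a n fun _ => y) μ :=
  (ContinuousMultilinearMap.apply 𝕜 (fun _ : Fin n => E) F fun _ => y).integrable_comp (hq n)

theorem summable_integral_norm_series_apply (hq : ∀ n, Integrable (fun a => q a n) μ)
    (hsum : ∀ r : ℝ≥0, Summable fun n => (∫ a, ‖q a n‖ ∂μ) * r ^ n) (y : E) :
    Summable fun n => ∫ a, ‖q a n fun _ => y‖ ∂μ := by
  refine (hsum ‖y‖₊).of_nonneg_of_le (fun n => integral_nonneg fun a => norm_nonneg _) fun n => ?_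
  rw [coe_nnnorm, ← integral_mul_const]
  refine integral_mono (integrable_series_apply hq n y).norm ((hq n).norm.mul_const _) fun a => ?_
  simpa using (q a n).le_opNorm fun _ => y

theorem integrable_of_hasSum_series_apply (hq : ∀ n, Integrable (fun a => q a n) μ)
    (hsum : ∀ r : ℝ≥0, Summable fun n => (∫ a, ‖q a n‖ ∂μ) * r ^ n)
    (hf : ∀ a y, HasSum (fun n => q a n fun _ => y) (f a y)) (y : E) :
    Integrable (fun a => f a y) μ :=
  Integrable.of_hasSum_of_summable_integral_norm (integrable_series_apply hq · y)
    (summable_integral_norm_series_apply hq hsum y) (ae_of_all _ fun a => hf a y)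

theorem hasFPowerSeriesOnBall_integral [NormedSpace ℝ F]
    (hq : ∀ n, Integrable (fun a => q a n) μ)
    (hsum : ∀ r : ℝ≥0, Summable fun n => (∫ a, ‖q a n‖ ∂μ) * r ^ n)
    (hf : ∀ a y, HasSum (fun n => q a n fun _ => y) (f a y)) :
    HasFPowerSeriesOnBall (fun y => ∫ a, f a y ∂μ) (fun n => ∫ a, q a n ∂μ) 0 ⊤ where
  r_le := top_le_iff.2 <| ENNReal.eq_top_of_forall_nnreal_le fun r =>
    FormalMultilinearSeries.le_radius_of_summable _ <| (hsum r).of_nonneg_of_le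
      (fun n => by positivity) fun n =>
        mul_le_mul_of_nonneg_right (norm_integral_le_integral_norm _) (by positivity)
  r_pos := ENNReal.zero_lt_top
  hasSum {y} _ := by
    simp_rw [zero_add, ContinuousMultilinearMap.integral_apply (hq _),
      ← (hf _ y).tsum_eq]
    exact hasSum_integral_of_summable_integral_norm (integrable_series_apply hq · y)
      (summable_integral_norm_series_apply hq hsum y)

end IntegralOfPowerSeries

noncomputable def expTailCoeff (n : ℕ) : ℂ := if n < 2 then 0 else (n ! : ℂ)⁻¹

theorem hasSum_expTailCoeff_mul_pow (w : ℂ) :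
    HasSum (fun n => expTailCoeff n * w ^ n) (Complex.exp w - 1 - w) := by
  rw [← hasSum_nat_add_iff' 2]
  have h := (hasSum_nat_add_iff' 2).2
    (Complex.exp_eq_exp_ℂ ▸ NormedSpace.exp_series_hasSum_exp' (𝕂 := ℂ) w)
  simpa [expTailCoeff, Finset.sum_range_succ, sub_sub] using h

theorem norm_expTailCoeff (n : ℕ) : ‖expTailCoeff n‖ = if n < 2 then 0 else (n ! : ℝ)⁻¹ := by
  unfold expTailCoeff; split_ifs <;> simp

theorem norm_expTailCoeff_mul_pow_le {n : ℕ} {r t : ℝ} (hr : 0 ≤ r) (ht : 0 ≤ t) :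
    ‖expTailCoeff n‖ * (r * t) ^ n ≤ r ^ n / n ! * min (t ^ 2) t +
      (1 / 2) ^ n * (Set.Ioi 1).indicator (fun t => Real.exp (2 * r * t)) t := by
  have henv : 0 ≤ (Set.Ioi (1:ℝ)).indicator (fun t => Real.exp (2 * r * t)) t :=
    Set.indicator_nonneg (fun _ _ => (Real.exp_pos _).le) t
  rw [norm_expTailCoeff]
  split_ifs with hn
  · simp only [zero_mul]; positivity
  rw [not_lt] at hn
  rcases le_or_gt t 1 with ht1 | ht1
  · have : t ^ n ≤ min (t ^ 2) t := by
      rw [min_eq_left (by nlinarith)]; exact pow_le_pow_of_le_one ht ht1 hn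
    calc (n ! : ℝ)⁻¹ * (r * t) ^ n = r ^ n / n ! * t ^ n := by ring
      _ ≤ r ^ n / n ! * min (t ^ 2) t := by gcongr
      _ ≤ _ := le_add_of_nonneg_right (by positivity)
  · rw [Set.indicator_of_mem (Set.mem_Ioi.2 ht1)]
    calc (n ! : ℝ)⁻¹ * (r * t) ^ n = (1 / 2) ^ n * ((2 * r * t) ^ n / n !) := by
          rw [mul_assoc, mul_pow 2, ← mul_div_assoc, ← mul_assoc, ← mul_pow]; norm_num; ring
      _ ≤ (1 / 2) ^ n * Real.exp (2 * r * t) := by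
          gcongr; exact Real.pow_div_factorial_le_exp _ (by positivity) n
      _ ≤ _ := le_add_of_nonneg_left (by positivity)

section ExpTailSeries

open FormalMultilinearSeries

variable {E : Type*} [NormedAddCommGroup E] [NormedSpace ℂ E]

noncomputable def expTailSeries (L : E →L[ℂ] ℂ) : FormalMultilinearSeries ℂ E ℂ :=
  (ofScalars ℂ expTailCoeff).compContinuousLinearMap L

theorem hasSum_expTailSeries (L : E →L[ℂ] ℂ) (y : E) :
    HasSum (fun n => expTailSeries L n fun _ => y) (Complex.exp (L y) - 1 - L y) := by
  simpa [expTailSeries, compContinuousLinearMap_apply, Function.comp_def, ofScalars_apply_eq,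
    mul_comm] using hasSum_expTailCoeff_mul_pow (L y)

theorem norm_expTailSeries_le (L : E →L[ℂ] ℂ) (n : ℕ) :
    ‖expTailSeries L n‖ ≤ ‖expTailCoeff n‖ * ‖L‖ ^ n := by
  refine ((ofScalars ℂ expTailCoeff n).norm_compContinuousLinearMap_le _).trans ?_
  rw [ofScalars_norm, Finset.prod_const, Finset.card_univ, Fintype.card_fin]

theorem continuous_expTailSeries (n : ℕ) :
    Continuous fun L : E →L[ℂ] ℂ => expTailSeries L n :=
  ((ContinuousMultilinearMap.compContinuousLinearMapContinuousMultilinear ℂ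
    (fun _ : Fin n => E) (fun _ => ℂ) ℂ).coe_continuous.comp
      (continuous_pi fun _ => continuous_id)).clm_apply continuous_const

theorem norm_expTailSeries_mul_pow_le (L : E →L[ℂ] ℂ) {r : ℝ} (hr : 0 ≤ r) (n : ℕ) :
    ‖expTailSeries L n‖ * r ^ n ≤ r ^ n / n ! * min (‖L‖ ^ 2) ‖L‖ +
      (1 / 2) ^ n * (Set.Ioi 1).indicator (fun t => Real.exp (2 * r * t)) ‖L‖ :=
  calc ‖expTailSeries L n‖ * r ^ n ≤ ‖expTailCoeff n‖ * ‖L‖ ^ n * r ^ n := by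
        gcongr; exact norm_expTailSeries_le L n
    _ = ‖expTailCoeff n‖ * (r * ‖L‖) ^ n := by ring
    _ ≤ _ := norm_expTailCoeff_mul_pow_le hr (norm_nonneg L)

end ExpTailSeries

structure HasExpMoments {X : Type*} [MeasurableSpace X] (μ : Measure X) (ρ : X → ℝ) : Prop where
  integrable_min_sq : Integrable (fun x => min (ρ x ^ 2) (ρ x)) μ
  integrable_exp : ∀ c, 0 ≤ c →
    Integrable (fun x => (Set.Ioi 1).indicator (fun t => Real.exp (c * t)) (ρ x)) μ

section LevyExponent

variable {X E : Type*} [MeasurableSpace X] {μ : Measure X} [NormedAddCommGroup E]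
  [NormedSpace ℂ E] {ℓ : X → E →L[ℂ] ℂ}

theorem integrable_expTailSeries (hℓ : AEStronglyMeasurable ℓ μ)
    (hmom : HasExpMoments μ (‖ℓ ·‖)) (n : ℕ) : Integrable (fun x => expTailSeries (ℓ x) n) μ := by
  refine Integrable.mono' ((hmom.integrable_min_sq.const_mul (1 ^ n / n !)).add
      ((hmom.integrable_exp (2 * 1) (by norm_num)).const_mul ((1 / 2) ^ n)))
    ((continuous_expTailSeries n).comp_aestronglyMeasurable hℓ) (ae_of_all _ fun x => ?_)
  simpa using norm_expTailSeries_mul_pow_le (ℓ x) zero_le_one n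

theorem summable_integral_norm_expTailSeries_mul_pow (hℓ : AEStronglyMeasurable ℓ μ)
    (hmom : HasExpMoments μ (‖ℓ ·‖)) (r : ℝ≥0) :
    Summable fun n => (∫ x, ‖expTailSeries (ℓ x) n‖ ∂μ) * r ^ n := by
  have hsmall := hmom.integrable_min_sq
  have hlarge := hmom.integrable_exp (2 * r) (by positivity)
  refine Summable.of_nonneg_of_le (fun n => by positivity) (fun n => ?_)
    (((Real.summable_pow_div_factorial r).mul_right (∫ x, min (‖ℓ x‖ ^ 2) ‖ℓ x‖ ∂μ)).add
      ((summable_geometric_of_lt_one (by norm_num) (by norm_num : (1 / 2 : ℝ) < 1)).mul_right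
        (∫ x, (Set.Ioi 1).indicator (fun t => Real.exp (2 * r * t)) ‖ℓ x‖ ∂μ)))
  rw [← integral_mul_const, ← integral_const_mul, ← integral_const_mul,
    ← integral_add (hsmall.const_mul _) (hlarge.const_mul _)]
  exact integral_mono ((integrable_expTailSeries hℓ hmom n).norm.mul_const _)
    ((hsmall.const_mul _).add (hlarge.const_mul _))
    fun x => norm_expTailSeries_mul_pow_le (ℓ x) r.2 n

theorem integrable_and_hasFPowerSeriesOnBall_integral_exp_sub_one_sub
    (hℓ : AEStronglyMeasurable ℓ μ) (hmom : HasExpMoments μ (‖ℓ ·‖)) :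
    (∀ y, Integrable (fun x => Complex.exp (ℓ x y) - 1 - ℓ x y) μ) ∧
      HasFPowerSeriesOnBall (fun y => ∫ x, Complex.exp (ℓ x y) - 1 - ℓ x y ∂μ)
        (fun n => ∫ x, expTailSeries (ℓ x) n ∂μ) 0 ⊤ := by
  have hq := integrable_expTailSeries hℓ hmom
  have hsum := summable_integral_norm_expTailSeries_mul_pow hℓ hmom
  have hf (x : X) (y : E) := hasSum_expTailSeries (ℓ x) y
  exact ⟨integrable_of_hasSum_series_apply hq hsum hf, hasFPowerSeriesOnBall_integral hq hsum hf⟩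

end LevyExponent

namespace EuclideanSpace

variable {ι : Type*} [Fintype ι]

theorem norm_le_sum_norm {𝕜 : Type*} [RCLike 𝕜] (z : EuclideanSpace 𝕜 ι) :
    ‖z‖ ≤ ∑ i, ‖z i‖ := by
  conv_lhs => rw [← (EuclideanSpace.basisFun ι 𝕜).sum_repr z]
  refine (norm_sum_le _ _).trans (le_of_eq ?_)
  simp [norm_smul, (EuclideanSpace.basisFun ι 𝕜).orthonormal.1]

noncomputable def signVector [DecidableEq ι] (c : ℝ) (t : Finset ι) : EuclideanSpace ℝ ι :=
  WithLp.toLp 2 fun i => if i ∈ t then c else -c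

theorem exp_inner_signVector [DecidableEq ι] (c : ℝ) (t : Finset ι) (z : EuclideanSpace ℝ ι) :
    Real.exp ⟪signVector c t, z⟫ =
      (∏ i ∈ t, Real.exp (c * z i)) * ∏ i ∈ tᶜ, Real.exp (-c * z i) := by
  rw [PiLp.inner_apply, Real.exp_sum, ← Finset.prod_mul_prod_compl t]
  congr 1 <;> refine Finset.prod_congr rfl fun i hi => ?_
  · simp [signVector, hi, mul_comm]
  · simp [signVector, Finset.mem_compl.1 hi, mul_comm]

theorem exp_mul_norm_le_sum_exp_inner [DecidableEq ι] {c : ℝ} (hc : 0 ≤ c)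
    (z : EuclideanSpace ℝ ι) :
    Real.exp (c * ‖z‖) ≤ ∑ t : Finset ι, Real.exp ⟪signVector c t, z⟫ :=
  calc Real.exp (c * ‖z‖) ≤ ∏ i, Real.exp (c * |z i|) := by
        rw [← Real.exp_sum, ← Finset.mul_sum]
        gcongr
        exact norm_le_sum_norm z
    _ ≤ ∏ i, (Real.exp (c * z i) + Real.exp (-c * z i)) := by
        gcongr with i
        rcases abs_cases (z i) with ⟨h, _⟩ | ⟨h, _⟩ <;> rw [h]
        · exact le_add_of_nonneg_right (Real.exp_pos _).le
        · rw [mul_neg, ← neg_mul]; exact le_add_of_nonneg_left (Real.exp_pos _).le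
    _ = _ := by simp_rw [Fintype.prod_add, exp_inner_signVector]

noncomputable def complexPairing (z : EuclideanSpace ℝ ι) : EuclideanSpace ℂ ι →L[ℂ] ℂ :=
  innerSL ℂ (WithLp.toLp 2 fun i => (z i : ℂ))

theorem complexPairing_apply (z : EuclideanSpace ℝ ι) (y : EuclideanSpace ℂ ι) :
    complexPairing z y = ∑ i, y i * (z i : ℂ) := by
  simp [complexPairing, PiLp.inner_apply]

theorem norm_complexPairing (z : EuclideanSpace ℝ ι) : ‖complexPairing z‖ = ‖z‖ := by
  simp [complexPairing, EuclideanSpace.norm_eq]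

theorem continuous_complexPairing : Continuous (complexPairing (ι := ι)) :=
  (innerSL ℂ).continuous.comp (by fun_prop)

theorem hasExpMoments_norm {K : Measure (EuclideanSpace ℝ ι)}
    (hmom : ∫⁻ z, ENNReal.ofReal (min (‖z‖ ^ 2) ‖z‖) ∂K < ⊤)
    (hexp : ∀ k : EuclideanSpace ℝ ι,
      ∫⁻ z in {z : EuclideanSpace ℝ ι | 1 < ‖z‖}, ENNReal.ofReal (Real.exp ⟪k, z⟫) ∂K < ⊤) :
    HasExpMoments K (‖·‖) where
  integrable_min_sq := ⟨by fun_prop, (hasFiniteIntegral_iff_ofReal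
    (ae_of_all _ fun z => le_min (by positivity) (norm_nonneg z))).2 hmom⟩
  integrable_exp c hc := by
    classical
    have hk (k : EuclideanSpace ℝ ι) :
        IntegrableOn (fun z => Real.exp ⟪k, z⟫) {z | 1 < ‖z‖} K :=
      ⟨by fun_prop, (hasFiniteIntegral_iff_ofReal (ae_of_all _ fun z => (Real.exp_pos _).le)).2
        (hexp k)⟩
    have hS : MeasurableSet {z : EuclideanSpace ℝ ι | 1 < ‖z‖} :=
      measurableSet_lt measurable_const measurable_norm
    have hsum : IntegrableOn (fun z => ∑ t : Finset ι, Real.exp ⟪signVector c t, z⟫)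
        {z | 1 < ‖z‖} K :=
      integrable_finsetSum _ fun t _ => hk (signVector c t)
    refine (hsum.integrable_indicator hS).mono'
      ((Measurable.indicator (by fun_prop) measurableSet_Ioi).comp
        measurable_norm).aestronglyMeasurable
      (ae_of_all _ fun z => ?_)
    by_cases hz : 1 < ‖z‖
    · simpa [Set.indicator, hz, Real.norm_of_nonneg (Real.exp_pos _).le]
        using exp_mul_norm_le_sum_exp_inner hc z
    · simp [Set.indicator, hz]

@[fun_prop]
theorem analyticAt_apply {𝕜 : Type*} [RCLike 𝕜] (i : ι) (y : EuclideanSpace 𝕜 ι) :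
    AnalyticAt 𝕜 (fun y : EuclideanSpace 𝕜 ι => y i) y :=
  (EuclideanSpace.proj i : EuclideanSpace 𝕜 ι →L[𝕜] 𝕜).analyticAt y

end EuclideanSpace

theorem statement8_general {p : ℕ} (a : EuclideanSpace ℝ (Fin p))
    (A : Matrix (Fin p) (Fin p) ℝ)
    (K : Measure (EuclideanSpace ℝ (Fin p)))
    (hmom : ∫⁻ z, ENNReal.ofReal (min (‖z‖ ^ 2) ‖z‖) ∂K < ⊤)
    (hexp : ∀ k : EuclideanSpace ℝ (Fin p),
      ∫⁻ z in {z : EuclideanSpace ℝ (Fin p) | 1 < ‖z‖},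
        ENNReal.ofReal (Real.exp ⟪k, z⟫) ∂K < ⊤) :
    (∀ y : EuclideanSpace ℂ (Fin p),
        Integrable (fun z : EuclideanSpace ℝ (Fin p) =>
          Complex.exp (∑ i, y i * (z i : ℂ)) - 1 - ∑ i, y i * (z i : ℂ)) K) ∧
      AnalyticOnNhd ℂ
        (fun y : EuclideanSpace ℂ (Fin p) =>
          (∑ i, y i * (a i : ℂ)) + (1 / 2) * ∑ i, ∑ j, y i * (A i j : ℂ) * y j
            + ∫ z, (Complex.exp (∑ i, y i * (z i : ℂ)) - 1 - ∑ i, y i * (z i : ℂ)) ∂K)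
        Set.univ := by
  obtain ⟨hint, hseries⟩ := integrable_and_hasFPowerSeriesOnBall_integral_exp_sub_one_sub
    (μ := K) EuclideanSpace.continuous_complexPairing.aestronglyMeasurable
    (by simpa only [EuclideanSpace.norm_complexPairing]
      using EuclideanSpace.hasExpMoments_norm hmom hexp)
  simp only [EuclideanSpace.complexPairing_apply] at hint hseries
  refine ⟨hint, fun y _ => ?_⟩
  have hintegral := hseries.analyticAt_of_mem (y := y) (by simp)
  fun_prop

/-- With `a ∈ ℝ^p`, `A` symmetric, and `K` a measure on `ℝ^p∖{0}` having a
finite second/first moment `∫ (|z|²∧|z|) dK < ∞` and all exponential tail moments, the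
function `R(y) = y·a + ½ yᵀAy + ∫ (e^{y·z} − 1 − y·z) dK(z)` is well-defined and analytic on
all of `ℂ^p`. -/
theorem statement8 {p : ℕ} (a : EuclideanSpace ℝ (Fin p))
    (A : Matrix (Fin p) (Fin p) ℝ) (hA : A.IsSymm)
    (K : Measure (EuclideanSpace ℝ (Fin p))) (hK0 : K {0} = 0)
    (hmom : ∫⁻ z, ENNReal.ofReal (min (‖z‖ ^ 2) ‖z‖) ∂K < ⊤)
    (hexp : ∀ k : EuclideanSpace ℝ (Fin p),
      ∫⁻ z in {z : EuclideanSpace ℝ (Fin p) | 1 < ‖z‖},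
        ENNReal.ofReal (Real.exp ⟪k, z⟫) ∂K < ⊤) :
    (∀ y : EuclideanSpace ℂ (Fin p),
        Integrable (fun z : EuclideanSpace ℝ (Fin p) =>
          Complex.exp (∑ i, y i * (z i : ℂ)) - 1 - ∑ i, y i * (z i : ℂ)) K) ∧
      AnalyticOnNhd ℂ
        (fun y : EuclideanSpace ℂ (Fin p) =>
          (∑ i, y i * (a i : ℂ)) + (1 / 2) * ∑ i, ∑ j, y i * (A i j : ℂ) * y j
            + ∫ z, (Complex.exp (∑ i, y i * (z i : ℂ)) - 1 - ∑ i, y i * (z i : ℂ)) ∂K)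
        Set.univ :=
  statement8_general a A K hmom hexp
end
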